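/- There exists a nonzero polynomial g in 6 real variables such that for all b, b' ∈ ℝ⁶ with g(b) ≠ 0 and g(b') ≠ 0: if the slowness polynomials P_b = det(Γ_b − I₂) and P_{b'} = det(Γ_{b'} − I₂) are equal as elements of ℝ[p₁,p₂], then b = b'. In other words, in dimension 2 the map sending a stiffness tensor to its slowness polynomial is generically injective. -/

import Mathlib

open MvPolynomial Matrix

/-- The Christoffel matrix of a two-dimensional stiffness tensor with Voigt parameters
`b = (b11,b12,b13,b22,b23,b33)` (indexed `0,…,5`), with polynomial entries in `ℝ[p₁,p₂]`
(where `p₁ = X 0`, `p₂ = X 1`). -/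
noncomputable def christoffel2R (b : Fin 6 → ℝ) :
    Matrix (Fin 2) (Fin 2) (MvPolynomial (Fin 2) ℝ) :=
  !![C (b 0) * X 0 ^ 2 + C (2 * b 2) * X 0 * X 1 + C (b 5) * X 1 ^ 2,
     C (b 2) * X 0 ^ 2 + C (b 5 + b 1) * X 0 * X 1 + C (b 4) * X 1 ^ 2;
     C (b 2) * X 0 ^ 2 + C (b 5 + b 1) * X 0 * X 1 + C (b 4) * X 1 ^ 2,
     C (b 5) * X 0 ^ 2 + C (2 * b 4) * X 0 * X 1 + C (b 3) * X 1 ^ 2]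

/-- The slowness polynomial `P_b = det(Γ_b − I₂) ∈ ℝ[p₁,p₂]`. -/
noncomputable def slownessPoly2R (b : Fin 6 → ℝ) : MvPolynomial (Fin 2) ℝ :=
  (christoffel2R b - 1).det

/-!
Write `Γ_b(p, q)` for the Christoffel matrix evaluated at a point. Since
`P_b(p, q) = det Γ_b(p, q) - tr Γ_b(p, q) + 1` and the two terms are homogeneous of degrees 4 and 2,
`P_b` determines the quadratic form `tr Γ_b` and the quartic form `det Γ_b`. The trace fixes
`b11 + b33`, `b22 + b33` and `b13 + b23`, so any `b'` with the same trace is `b` moved along a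
three-parameter family `(x, y, z)`. Equality of the quartic forms then gives, with
`s = b13 + b23` and `d = b11 - b22`, the relations `d x = 2 s z` and `d z + s y = 0` together with
two quadratic ones. Eliminating `x` and `y` from the quadratic ones expresses `z (d² + 4 s²)` in
two different ways, and their difference is `2 z H(b)` for an explicit cubic `H`. Hence
`z = 0`, and then `x = y = 0`, as soon as `s d H(b) ≠ 0`.
-/

section CommRing

variable {R : Type*} [CommRing R]

theorem Matrix.det_sub_one_fin_two (A : Matrix (Fin 2) (Fin 2) R) :
    (A - 1).det = A.det - A.trace + 1 := by
  simp only [det_fin_two, trace_fin_two, sub_apply, one_apply_eq, one_apply_ne zero_ne_one,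
    one_apply_ne one_ne_zero]
  ring

def christoffelAt (b : Fin 6 → R) (p q : R) : Matrix (Fin 2) (Fin 2) R :=
  !![b 0 * p ^ 2 + 2 * b 2 * p * q + b 5 * q ^ 2, b 2 * p ^ 2 + (b 5 + b 1) * p * q + b 4 * q ^ 2;
     b 2 * p ^ 2 + (b 5 + b 1) * p * q + b 4 * q ^ 2, b 5 * p ^ 2 + 2 * b 4 * p * q + b 3 * q ^ 2]

theorem christoffelAt_mul (b : Fin 6 → R) (c p q : R) :
    christoffelAt b (c * p) (c * q) = c ^ 2 • christoffelAt b p q := by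
  ext i j
  fin_cases i <;> fin_cases j <;> simp [christoffelAt] <;> ring

/-- Moving `b` by `(x, y, z)` keeps `tr Γ_b`; `y` is the change of `b 1 + b 5`. -/
def traceShift (b : Fin 6 → R) (x y z : R) : Fin 6 → R :=
  ![b 0 - x, b 1 - x + y, b 2 + z, b 3 - x, b 4 - z, b 5 + x]

noncomputable def genericityPoly : MvPolynomial (Fin 6) R :=
  (X 2 + X 4) * (X 0 - X 3) * ((X 2 + X 4) * (X 0 - X 3) * (X 0 - 2 * X 5 - X 1)
    - (X 0 - X 3) ^ 2 * X 2 + 2 * (X 2 + X 4) ^ 2 * (X 2 - X 4))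

theorem eval_genericityPoly (b : Fin 6 → R) :
    eval b genericityPoly = (b 2 + b 4) * (b 0 - b 3) * ((b 2 + b 4) * (b 0 - b 3) *
      (b 0 - 2 * b 5 - b 1) - (b 0 - b 3) ^ 2 * b 2 + 2 * (b 2 + b 4) ^ 2 * (b 2 - b 4)) := by
  simp [genericityPoly]

theorem genericityPoly_ne_zero [Nontrivial R] : (genericityPoly : MvPolynomial (Fin 6) R) ≠ 0 := by
  intro h
  have := congrArg (eval ![1, 1, 1, 0, 0, 0]) h
  simp only [eval_genericityPoly, cons_val] at this
  norm_num at this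

end CommRing

section Field

variable {K : Type*} [Field K] [CharZero K]

theorem exists_eq_traceShift_of_trace_christoffelAt_eq {b b' : Fin 6 → K}
    (h : ∀ p q, (christoffelAt b p q).trace = (christoffelAt b' p q).trace) :
    ∃ x y z, b' = traceShift b x y z := by
  have h₁₀ := h 1 0
  have h₀₁ := h 0 1
  have h₁₁ := h 1 1
  simp only [christoffelAt, trace_fin_two, of_apply, cons_val] at h₁₀ h₀₁ h₁₁
  refine ⟨b' 5 - b 5, b' 1 + b' 5 - b 1 - b 5, b' 2 - b 2, ?_⟩
  funext i
  fin_cases i <;> simp [traceShift] <;> grind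

theorem eq_zero_of_det_christoffelAt_traceShift_eq {b : Fin 6 → K} {x y z : K}
    (hg : eval b genericityPoly ≠ 0)
    (h : ∀ p q, (christoffelAt (traceShift b x y z) p q).det = (christoffelAt b p q).det) :
    x = 0 ∧ y = 0 ∧ z = 0 := by
  rw [eval_genericityPoly, mul_ne_zero_iff, mul_ne_zero_iff] at hg
  obtain ⟨⟨hs, hd⟩, hH⟩ := hg
  have h₁₀ := h 1 0
  have h₀₁ := h 0 1
  have h₁₁ := h 1 1
  have h₁ₙ := h 1 (-1)
  simp only [christoffelAt, traceShift, det_fin_two, of_apply, cons_val] at h₁₀ h₀₁ h₁₁ h₁ₙ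
  have E₁ : (b 0 - b 3) * x = 2 * (b 2 + b 4) * z := by linear_combination h₁₀ - h₀₁
  have E₂ : (b 0 - b 3) * z + (b 2 + b 4) * y = 0 := by linear_combination (h₁ₙ - h₁₁) / 4
  have E₃ : 4 * z * (b 2 - b 4 + z) + y * (2 * (b 5 + b 1) + y) = 0 := by
    linear_combination -(h₁₁ + h₁ₙ) / 2
  have E₄ : x * (b 0 - b 5 - x) = z * (2 * b 2 + z) := by linear_combination h₁₀
  have hzH : z * ((b 2 + b 4) * (b 0 - b 3) * (b 0 - 2 * b 5 - b 1) - (b 0 - b 3) ^ 2 * b 2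
      + 2 * (b 2 + b 4) ^ 2 * (b 2 - b 4)) = 0 := by
    linear_combination ((b 2 + b 4) ^ 2 * E₃
      - (2 * (b 5 + b 1) * (b 2 + b 4) + (b 2 + b 4) * y - (b 0 - b 3) * z) * E₂
      + (b 0 - b 3) ^ 2 * E₄
      - ((b 0 - b 3) * (b 0 - b 5) - (b 0 - b 3) * x - 2 * (b 2 + b 4) * z) * E₁) / 2
  obtain rfl : z = 0 := (mul_eq_zero.mp hzH).resolve_right hH
  refine ⟨?_, ?_, rfl⟩
  · simpa [hd] using E₁
  · simpa [hs] using E₂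

theorem eq_of_trace_det_christoffelAt_eq {b b' : Fin 6 → K} (hg : eval b genericityPoly ≠ 0)
    (htr : ∀ p q, (christoffelAt b p q).trace = (christoffelAt b' p q).trace)
    (hdet : ∀ p q, (christoffelAt b p q).det = (christoffelAt b' p q).det) : b = b' := by
  obtain ⟨x, y, z, rfl⟩ := exists_eq_traceShift_of_trace_christoffelAt_eq htr
  obtain ⟨rfl, rfl, rfl⟩ :=
    eq_zero_of_det_christoffelAt_traceShift_eq hg fun p q => (hdet p q).symm
  funext i
  fin_cases i <;> simp [traceShift]

end Field

theorem eval_slownessPoly2R (b : Fin 6 → ℝ) (p q : ℝ) :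
    eval ![p, q] (slownessPoly2R b) =
      (christoffelAt b p q).det - (christoffelAt b p q).trace + 1 := by
  have hΓ : (eval ![p, q]).mapMatrix (christoffel2R b) = christoffelAt b p q := by
    ext i j
    fin_cases i <;> fin_cases j <;> simp [christoffel2R, christoffelAt]
  rw [slownessPoly2R, RingHom.map_det, map_sub, map_one, hΓ, det_sub_one_fin_two]

theorem trace_det_christoffelAt_eq_of_slownessPoly2R_eq {b b' : Fin 6 → ℝ}
    (h : slownessPoly2R b = slownessPoly2R b') (p q : ℝ) :
    (christoffelAt b p q).trace = (christoffelAt b' p q).trace ∧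
      (christoffelAt b p q).det = (christoffelAt b' p q).det := by
  have h₁ := congrArg (eval ![p, q]) h
  have h₂ := congrArg (eval ![2 * p, 2 * q]) h
  simp only [eval_slownessPoly2R, christoffelAt_mul, trace_smul, det_smul, smul_eq_mul,
    Fintype.card_fin] at h₁ h₂
  constructor
  · linear_combination (h₂ - 16 * h₁) / 12
  · linear_combination (h₂ - 4 * h₁) / 12

/-- In dimension 2, the map from a stiffness tensor to its slowness
polynomial is generically injective. -/
theorem generic_injectivity_2D :
    ∃ g : MvPolynomial (Fin 6) ℝ, g ≠ 0 ∧
      ∀ b b' : Fin 6 → ℝ, eval b g ≠ 0 → eval b' g ≠ 0 →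
        slownessPoly2R b = slownessPoly2R b' → b = b' := by
  refine ⟨genericityPoly, genericityPoly_ne_zero, fun b b' hb _ h => ?_⟩
  exact eq_of_trace_det_christoffelAt_eq hb
    (fun p q => (trace_det_christoffelAt_eq_of_slownessPoly2R_eq h p q).1)
    (fun p q => (trace_det_christoffelAt_eq_of_slownessPoly2R_eq h p q).2)
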